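/- arXiv:2507.14064 — 3 statements merged into one kernel-verified Lean document; each statement's English description precedes it below -/
import Mathlib

section
/- Let m ≥ 1 and let X₁, X₂, X₃, X₄ be i.i.d. random variables uniform on {0, 1, ..., m}. Then the probability that X₁ + X₃ = X₂ + X₄ equals (2m² + 4m + 3)/(3(m+1)³). -/
/-!
Fixing `a` and `b`, the pairs `(c, d)` in `{0, …, n-1}²` with `a + c = b + d` are
`d ∈ [a - b, n - (b - a))`, so there are `n - |a - b|` of them. Summing over `a, b`,
by induction on `n`, gives `3 · #{a + c = b + d} = 2n³ + n`; put `n = m + 1` and divide by `n⁴`.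
-/

open Finset

theorem card_filter_add_eq_add_eq_sum_range (n : ℕ) :
    ((univ : Finset (Fin n × Fin n × Fin n × Fin n)).filter
        (fun x => (x.1 : ℕ) + (x.2.2.1 : ℕ) = (x.2.1 : ℕ) + (x.2.2.2 : ℕ))).card
      = ∑ a ∈ range n, ∑ b ∈ range n, ∑ c ∈ range n, ∑ d ∈ range n,
          if a + c = b + d then 1 else 0 := by
  simp only [card_filter, Fintype.sum_prod_type, Finset.sum_range]

theorem sum_range_sum_range_ite_add_eq_add (n a b : ℕ) :
    ∑ c ∈ range n, ∑ d ∈ range n, (if a + c = b + d then 1 else 0) = n - (b - a) - (a - b) := by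
  have hsolve : ∀ d, ∑ c ∈ range n, (if a + c = b + d then 1 else 0)
      = if b + d - a < n ∧ a ≤ b + d then 1 else 0 := by
    intro d
    have hc : ∀ c, a + c = b + d ↔ b + d - a = c ∧ a ≤ b + d := by omega
    simp only [hc, ite_and, sum_ite_eq, mem_range]
  have hsupport : (range n).filter (fun d => b + d - a < n ∧ a ≤ b + d)
      = Ico (a - b) (n - (b - a)) := by
    ext d
    simp only [mem_filter, mem_range, mem_Ico]
    omega
  rw [sum_comm, sum_congr rfl fun d _ => hsolve d, sum_boole, hsupport, Nat.card_Ico, Nat.cast_id]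

theorem three_mul_sum_range_sum_range_sub_dist (n : ℕ) :
    3 * ∑ a ∈ range n, ∑ b ∈ range n, (n - (b - a) - (a - b)) = 2 * n ^ 3 + n := by
  induction n with
  | zero => simp
  | succ n ih =>
    have hrow : ∀ a ∈ range n, ∑ b ∈ range n, (n + 1 - (b - a) - (a - b))
        = ∑ b ∈ range n, (n - (b - a) - (a - b)) + n := by
      intro a ha
      calc ∑ b ∈ range n, (n + 1 - (b - a) - (a - b))
          = ∑ b ∈ range n, (n - (b - a) - (a - b) + 1) := by
            refine sum_congr rfl fun b hb => ?_
            simp only [mem_range] at ha hb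
            omega
        _ = ∑ b ∈ range n, (n - (b - a) - (a - b)) + n := by simp [sum_add_distrib]
    have hlast_col : ∀ a ∈ range n, n + 1 - (n - a) - (a - n) = a + 1 := by
      intro a ha; simp only [mem_range] at ha; omega
    have hlast_row : ∀ b ∈ range n, n + 1 - (b - n) - (n - b) = b + 1 := by
      intro b hb; simp only [mem_range] at hb; omega
    have hgauss : (∑ a ∈ range n, (a + 1)) * 2 = (n + 1) * n := by
      have h := sum_range_id_mul_two (n + 1)
      rw [sum_range_succ'] at h
      simpa using h
    simp only [sum_range_succ, sum_add_distrib]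
    rw [sum_congr rfl hrow, sum_add_distrib, sum_congr rfl hlast_col, sum_congr rfl hlast_row]
    simp only [sum_const, card_range, smul_eq_mul, Nat.sub_self, tsub_zero]
    linarith

theorem three_mul_card_filter_add_eq_add (n : ℕ) :
    3 * ((univ : Finset (Fin n × Fin n × Fin n × Fin n)).filter
        (fun x => (x.1 : ℕ) + (x.2.2.1 : ℕ) = (x.2.1 : ℕ) + (x.2.2.2 : ℕ))).card
      = 2 * n ^ 3 + n := by
  rw [card_filter_add_eq_add_eq_sum_range, ← three_mul_sum_range_sum_range_sub_dist]
  congr 1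
  exact sum_congr rfl fun a _ => sum_congr rfl fun b _ => sum_range_sum_range_ite_add_eq_add n a b

theorem stmt7_general (m : ℕ) :
    (((Finset.univ : Finset (Fin (m+1) × Fin (m+1) × Fin (m+1) × Fin (m+1))).filter
        (fun x => (x.1 : ℕ) + (x.2.2.1 : ℕ) = (x.2.1 : ℕ) + (x.2.2.2 : ℕ))).card : ℝ) /
      ((m + 1 : ℝ)) ^ 4 =
    (2 * (m : ℝ) ^ 2 + 4 * m + 3) / (3 * ((m : ℝ) + 1) ^ 3) := by
  have hcount : (3 : ℝ) * ((univ : Finset (Fin (m+1) × Fin (m+1) × Fin (m+1) × Fin (m+1))).filter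
      (fun x => (x.1 : ℕ) + (x.2.2.1 : ℕ) = (x.2.1 : ℕ) + (x.2.2.2 : ℕ))).card
        = 2 * ((m : ℝ) + 1) ^ 3 + ((m : ℝ) + 1) := by
    exact_mod_cast three_mul_card_filter_add_eq_add (m + 1)
  rw [div_eq_div_iff (by positivity) (by positivity)]
  linear_combination ((m : ℝ) + 1) ^ 3 * hcount

theorem stmt7 (m : ℕ) (hm : 1 ≤ m) :
    (((Finset.univ : Finset (Fin (m+1) × Fin (m+1) × Fin (m+1) × Fin (m+1))).filter
        (fun x => (x.1 : ℕ) + (x.2.2.1 : ℕ) = (x.2.1 : ℕ) + (x.2.2.2 : ℕ))).card : ℝ) /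
      ((m + 1 : ℝ)) ^ 4 =
    (2 * (m : ℝ) ^ 2 + 4 * m + 3) / (3 * ((m : ℝ) + 1) ^ 3) :=
  stmt7_general m
end

section
/- Asymmetric Lovász Local Lemma lower bound: let A₁, ..., Aₙ be events with dependency graph G, and suppose there exist x₁, ..., xₙ ∈ (0,1) such that P(Aᵢ) ≤ xᵢ · Π_{j ∈ N(i)} (1 - xⱼ) for all i. Then P(⋂ᵢ Āᵢ) ≥ Π_{i=1}^n (1 - xᵢ) > 0. -/
/-!
Write `B S` (`avoiding A S` below) for the event that no `A j` with `j ∈ S` occurs. By strong induction on `S` one shows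
`P(A i ∩ B S) ≤ x i · P(B S)` for every `i ∉ S`: removing from `S` the neighbours of `i` only
enlarges `A i ∩ B S`, the remaining events are independent of `A i`, and adding the neighbours back
one at a time costs at most a factor `1 - x j` each, by the induction hypothesis. Peeling off all
events in the same way then gives `P(B [n]) ≥ ∏ (1 - x i)`.
-/

open MeasureTheory

namespace LovaszLocalLemma

variable {Ω ι : Type*} {A : ι → Set Ω}

def avoiding (A : ι → Set Ω) (S : Finset ι) : Set Ω := ⋂ j ∈ S, (A j)ᶜ

@[simp]
theorem avoiding_empty : avoiding A ∅ = Set.univ := by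
  simp [avoiding]

theorem avoiding_anti {S T : Finset ι} (h : S ⊆ T) : avoiding A T ⊆ avoiding A S :=
  Set.biInter_subset_biInter_left fun _ hj => h hj

theorem avoiding_insert [DecidableEq ι] (i : ι) (S : Finset ι) :
    avoiding A (insert i S) = avoiding A S \ A i := by
  ext ω
  simp only [avoiding, Finset.mem_insert, Set.mem_iInter, Set.mem_compl_iff, Set.mem_sdiff]
  grind

variable [MeasurableSpace Ω] {μ : Measure Ω} [DecidableEq ι]

theorem measureReal_avoiding_insert [IsFiniteMeasure μ] {i : ι} (hA : MeasurableSet (A i))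
    (S : Finset ι) :
    μ.real (avoiding A (insert i S)) =
      μ.real (avoiding A S) - μ.real (A i ∩ avoiding A S) := by
  rw [avoiding_insert, ← measureReal_inter_add_sdiff (s := avoiding A S) hA, Set.inter_comm]
  ring

theorem prod_mul_measureReal_avoiding_le [IsFiniteMeasure μ] (hA : ∀ i, MeasurableSet (A i))
    (x : ι → ℝ) {R T : Finset ι} (hRT : Disjoint R T) (hx : ∀ j ∈ T, x j ≤ 1)
    (hcond : ∀ j ∈ T, ∀ R' ⊆ R ∪ T, j ∉ R' →
      μ.real (A j ∩ avoiding A R') ≤ x j * μ.real (avoiding A R')) :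
    (∏ j ∈ T, (1 - x j)) * μ.real (avoiding A R) ≤ μ.real (avoiding A (R ∪ T)) := by
  induction T using Finset.induction_on with
  | empty => simp
  | @insert j T hjT ih =>
    have hjR : j ∉ R := Finset.disjoint_right.1 hRT (Finset.mem_insert_self j T)
    have hsub : R ∪ T ⊆ R ∪ insert j T := Finset.union_subset_union_right (Finset.subset_insert j T)
    have hcond_j := hcond j (Finset.mem_insert_self j T) (R ∪ T) hsub (by simp [hjR, hjT])
    have ih' := ih (Finset.disjoint_insert_right.1 hRT).2 (fun k hk => hx k (by simp [hk]))
      fun k hk R' hR' => hcond k (by simp [hk]) R' (hR'.trans hsub)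
    have hxj : 0 ≤ 1 - x j := sub_nonneg.2 (hx j (Finset.mem_insert_self j T))
    rw [Finset.union_insert, measureReal_avoiding_insert (hA j), Finset.prod_insert hjT, mul_assoc]
    nlinarith [mul_le_mul_of_nonneg_left ih' hxj]

def ConditionalBound (μ : Measure Ω) (A : ι → Set Ω) (x : ι → ℝ) (S : Finset ι) : Prop :=
  ∀ i ∉ S, μ.real (A i ∩ avoiding A S) ≤ x i * μ.real (avoiding A S)

theorem ConditionalBound.of_dependencyGraph [IsFiniteMeasure μ] (hA : ∀ i, MeasurableSet (A i))
    (N : ι → Finset ι)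
    (hind : ∀ (i : ι) (J : Finset ι), (∀ j ∈ J, j ≠ i ∧ j ∉ N i) →
      μ (A i ∩ ⋂ j ∈ J, (A j)ᶜ) = μ (A i) * μ (⋂ j ∈ J, (A j)ᶜ))
    (x : ι → ℝ) (hx0 : ∀ i, 0 ≤ x i) (hx1 : ∀ i, x i ≤ 1)
    (hP : ∀ i, μ.real (A i) ≤ x i * ∏ j ∈ N i, (1 - x j)) (S : Finset ι) :
    ConditionalBound μ A x S := by
  induction S using Finset.strongInduction with
  | H S ih =>
  intro i hiS
  have hsplit : S \ N i ∪ S ∩ N i = S := Finset.sdiff_union_inter S (N i)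
  have hpeel : (∏ j ∈ S ∩ N i, (1 - x j)) * μ.real (avoiding A (S \ N i)) ≤
      μ.real (avoiding A S) := by
    have := prod_mul_measureReal_avoiding_le hA x (Finset.disjoint_sdiff_inter S (N i))
      (fun j _ => hx1 j) fun j hj R' hR' hjR' =>
        ih R' (Finset.ssubset_iff_of_subset (hsplit ▸ hR') |>.2
          ⟨j, Finset.mem_of_mem_inter_left hj, hjR'⟩) j hjR'
    rwa [hsplit] at this
  have hindep : μ.real (A i ∩ avoiding A (S \ N i)) =
      μ.real (A i) * μ.real (avoiding A (S \ N i)) := by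
    rw [measureReal_def, avoiding, hind i _ fun j hj => ?_, ENNReal.toReal_mul]
    · rfl
    · rw [Finset.mem_sdiff] at hj
      exact ⟨fun h => hiS (h ▸ hj.1), hj.2⟩
  have hprod : ∏ j ∈ N i, (1 - x j) ≤ ∏ j ∈ S ∩ N i, (1 - x j) :=
    Finset.prod_le_prod_of_subset_of_le_one Finset.inter_subset_right
      (fun j _ => sub_nonneg.2 (hx1 j)) fun j _ _ => sub_le_self _ (hx0 j)
  calc μ.real (A i ∩ avoiding A S)
      ≤ μ.real (A i ∩ avoiding A (S \ N i)) :=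
        measureReal_mono (Set.inter_subset_inter_right _ (avoiding_anti Finset.sdiff_subset))
    _ = μ.real (A i) * μ.real (avoiding A (S \ N i)) := hindep
    _ ≤ (x i * ∏ j ∈ S ∩ N i, (1 - x j)) * μ.real (avoiding A (S \ N i)) := by
        gcongr
        exact (hP i).trans (mul_le_mul_of_nonneg_left hprod (hx0 i))
    _ = x i * ((∏ j ∈ S ∩ N i, (1 - x j)) * μ.real (avoiding A (S \ N i))) := by ring
    _ ≤ x i * μ.real (avoiding A S) := by gcongr; exact hx0 i

end LovaszLocalLemma

open LovaszLocalLemma in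
theorem stmt11 {Ω : Type*} [MeasurableSpace Ω] (μ : Measure Ω) [IsProbabilityMeasure μ]
    (n : ℕ) (A : Fin n → Set Ω) (hA : ∀ i, MeasurableSet (A i))
    (N : Fin n → Finset (Fin n))
    (hind : ∀ (i : Fin n) (J : Finset (Fin n)), (∀ j ∈ J, j ≠ i ∧ j ∉ N i) →
      μ (A i ∩ ⋂ j ∈ J, (A j)ᶜ) = μ (A i) * μ (⋂ j ∈ J, (A j)ᶜ))
    (x : Fin n → ℝ) (hx : ∀ i, x i ∈ Set.Ioo (0 : ℝ) 1)
    (hP : ∀ i, (μ (A i)).toReal ≤ x i * ∏ j ∈ N i, (1 - x j)) :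
    (∏ i, (1 - x i)) ≤ (μ (⋂ i, (A i)ᶜ)).toReal ∧ 0 < μ (⋂ i, (A i)ᶜ) := by
  have hx0 i : 0 ≤ x i := (hx i).1.le
  have hx1 i : x i ≤ 1 := (hx i).2.le
  have hbound : (∏ i, (1 - x i)) ≤ μ.real (avoiding A Finset.univ) := by
    simpa using prod_mul_measureReal_avoiding_le hA x (Finset.disjoint_empty_left _)
      (fun j _ => hx1 j) fun j _ R' _ hjR' =>
        ConditionalBound.of_dependencyGraph hA N hind x hx0 hx1 hP R' j hjR'
  have havoiding_univ : avoiding A Finset.univ = ⋂ i, (A i)ᶜ := by simp [avoiding]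
  rw [havoiding_univ] at hbound
  have hprod_pos : 0 < ∏ i, (1 - x i) := Finset.prod_pos fun i _ => sub_pos.2 (hx i).2
  exact ⟨hbound, (ENNReal.toReal_pos_iff.1 (hprod_pos.trans_le hbound)).1⟩
end

section
/- MT-distribution / LLL-distribution bound (symmetric case): under the symmetric LLL condition e·p·(d+1) ≤ 1 with events A₁,...,Aₙ of probability at most p and dependency degree at most d, for any event E determined by the same underlying independent random variables, P(E | ⋂ᵢ Āᵢ) ≤ P(E)·(1 + e·p)^{|N(E)|}, where N(E) is the set of events Aᵢ not mutually independent of E. -/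
open MeasureTheory

private lemma peel_aux {Ω : Type*} [MeasurableSpace Ω] (μ : Measure Ω) [IsFiniteMeasure μ]
    {n : ℕ} (A : Fin n → Set Ω) (hA : ∀ i, MeasurableSet (A i))
    (x : ℝ) (hx0 : 0 ≤ x) (hx1 : x ≤ 1) (S₂ : Finset (Fin n)) :
    ∀ T : Finset (Fin n),
      (∀ k ∈ T, ∀ T' ⊆ T, k ∉ T' →
        (μ (A k ∩ ⋂ j ∈ S₂ ∪ T', (A j)ᶜ)).toReal ≤ x * (μ (⋂ j ∈ S₂ ∪ T', (A j)ᶜ)).toReal) →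
      (1 - x) ^ T.card * (μ (⋂ j ∈ S₂, (A j)ᶜ)).toReal ≤ (μ (⋂ j ∈ S₂ ∪ T, (A j)ᶜ)).toReal := by
  intro T
  induction T using Finset.induction_on with
  | empty => intro _; simp
  | @insert k T₀ hk IH =>
    intro hcore
    have hcore₀ : ∀ k' ∈ T₀, ∀ T' ⊆ T₀, k' ∉ T' →
        (μ (A k' ∩ ⋂ j ∈ S₂ ∪ T', (A j)ᶜ)).toReal ≤ x * (μ (⋂ j ∈ S₂ ∪ T', (A j)ᶜ)).toReal :=
      fun k' hk' T' hT' hkT' =>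
        hcore k' (Finset.mem_insert_of_mem hk') T' (hT'.trans (Finset.subset_insert _ _)) hkT'
    have hIH := IH hcore₀
    set C := ⋂ j ∈ S₂ ∪ T₀, (A j)ᶜ with hCdef
    have hset : (⋂ j ∈ S₂ ∪ insert k T₀, (A j)ᶜ) = C \ A k := by
      rw [Finset.union_insert, Finset.set_biInter_insert, Set.diff_eq, Set.inter_comm]
    have hadd : μ (C ∩ A k) + μ (C \ A k) = μ C := measure_inter_add_diff C (hA k)
    have h1 : (μ (C \ A k)).toReal = (μ C).toReal - (μ (C ∩ A k)).toReal := by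
      have h := congrArg ENNReal.toReal hadd
      rw [ENNReal.toReal_add (measure_ne_top _ _) (measure_ne_top _ _)] at h
      linarith
    have h2 : (μ (C ∩ A k)).toReal ≤ x * (μ C).toReal := by
      rw [Set.inter_comm]
      exact hcore k (Finset.mem_insert_self _ _) T₀ (Finset.subset_insert _ _) hk
    have hcard : (insert k T₀).card = T₀.card + 1 := Finset.card_insert_of_notMem hk
    rw [hset, h1, hcard]
    have hCnn : (0:ℝ) ≤ (μ C).toReal := ENNReal.toReal_nonneg
    calc (1 - x) ^ (T₀.card + 1) * (μ (⋂ j ∈ S₂, (A j)ᶜ)).toReal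
        = (1 - x) * ((1 - x) ^ T₀.card * (μ (⋂ j ∈ S₂, (A j)ᶜ)).toReal) := by ring
      _ ≤ (1 - x) * (μ C).toReal := mul_le_mul_of_nonneg_left hIH (by linarith)
      _ ≤ (μ C).toReal - (μ (C ∩ A k)).toReal := by nlinarith

private lemma core_aux {Ω : Type*} [MeasurableSpace Ω] (μ : Measure Ω) [IsFiniteMeasure μ]
    {n : ℕ} (A : Fin n → Set Ω) (hA : ∀ i, MeasurableSet (A i))
    (N : Fin n → Finset (Fin n)) (d : ℕ) (hdeg : ∀ i, (N i).card ≤ d)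
    (hind : ∀ (i : Fin n) (J : Finset (Fin n)), (∀ j ∈ J, j ≠ i ∧ j ∉ N i) →
      μ (A i ∩ ⋂ j ∈ J, (A j)ᶜ) = μ (A i) * μ (⋂ j ∈ J, (A j)ᶜ))
    (p x : ℝ) (hp : ∀ i, (μ (A i)).toReal ≤ p)
    (hx0 : 0 ≤ x) (hx1 : x ≤ 1) (hpx : p ≤ x * (1 - x) ^ d) :
    ∀ S : Finset (Fin n), ∀ i,
      (μ (A i ∩ ⋂ j ∈ S, (A j)ᶜ)).toReal ≤ x * (μ (⋂ j ∈ S, (A j)ᶜ)).toReal := by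
  intro S
  induction S using Finset.strongInductionOn with
  | _ S IH =>
    intro i
    by_cases hiS : i ∈ S
    · have hempty : A i ∩ ⋂ j ∈ S, (A j)ᶜ = ∅ := by
        have hsub : (⋂ j ∈ S, (A j)ᶜ) ⊆ (A i)ᶜ := Set.biInter_subset_of_mem hiS
        apply Set.eq_empty_of_subset_empty
        intro ω hω
        exact (hsub hω.2) hω.1
      rw [hempty]
      simp only [measure_empty, ENNReal.toReal_zero]
      positivity
    · set S₁ := S ∩ N i with hS₁def
      set S₂ := S \ N i with hS₂def
      have hS : S₂ ∪ S₁ = S := Finset.sdiff_union_inter S (N i)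
      have hsubS₂ : S₂ ⊆ S := Finset.sdiff_subset
      have hmono : μ (A i ∩ ⋂ j ∈ S, (A j)ᶜ) ≤ μ (A i ∩ ⋂ j ∈ S₂, (A j)ᶜ) := by
        apply measure_mono
        apply Set.inter_subset_inter_right
        exact Set.biInter_subset_biInter_left hsubS₂
      have hindep := hind i S₂ (fun j hj => by
        have hj' := Finset.mem_sdiff.mp hj
        exact ⟨fun h => hiS (h ▸ hj'.1), hj'.2⟩)
      have hcore : ∀ k ∈ S₁, ∀ T' ⊆ S₁, k ∉ T' →
          (μ (A k ∩ ⋂ j ∈ S₂ ∪ T', (A j)ᶜ)).toReal ≤ x * (μ (⋂ j ∈ S₂ ∪ T', (A j)ᶜ)).toReal := by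
        intro k hk T' hT' hkT'
        have hkS : k ∈ S := (Finset.mem_inter.mp hk).1
        have hkN : k ∈ N i := (Finset.mem_inter.mp hk).2
        have hsub : S₂ ∪ T' ⊆ S :=
          Finset.union_subset hsubS₂ (hT'.trans Finset.inter_subset_left)
        have hknot : k ∉ S₂ ∪ T' := by
          intro hmem
          rcases Finset.mem_union.mp hmem with h | h
          · exact (Finset.mem_sdiff.mp h).2 hkN
          · exact hkT' h
        exact IH (S₂ ∪ T') ((Finset.ssubset_iff_of_subset hsub).mpr ⟨k, hkS, hknot⟩) k
      have hpeel := peel_aux μ A hA x hx0 hx1 S₂ S₁ hcore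
      rw [hS] at hpeel
      have hcard : S₁.card ≤ d := le_trans (Finset.card_le_card Finset.inter_subset_right) (hdeg i)
      have hpow : (1 - x) ^ d ≤ (1 - x) ^ S₁.card :=
        pow_le_pow_of_le_one (by linarith) (by linarith) hcard
      have hqnn : (0:ℝ) ≤ (μ (⋂ j ∈ S₂, (A j)ᶜ)).toReal := ENNReal.toReal_nonneg
      calc (μ (A i ∩ ⋂ j ∈ S, (A j)ᶜ)).toReal
          ≤ (μ (A i ∩ ⋂ j ∈ S₂, (A j)ᶜ)).toReal :=
            ENNReal.toReal_mono (measure_ne_top _ _) hmono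
        _ = (μ (A i)).toReal * (μ (⋂ j ∈ S₂, (A j)ᶜ)).toReal := by
            rw [hindep, ENNReal.toReal_mul]
        _ ≤ p * (μ (⋂ j ∈ S₂, (A j)ᶜ)).toReal :=
            mul_le_mul_of_nonneg_right (hp i) hqnn
        _ ≤ (x * (1 - x) ^ S₁.card) * (μ (⋂ j ∈ S₂, (A j)ᶜ)).toReal := by
            apply mul_le_mul_of_nonneg_right _ hqnn
            calc p ≤ x * (1 - x) ^ d := hpx
              _ ≤ x * (1 - x) ^ S₁.card := mul_le_mul_of_nonneg_left hpow hx0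
        _ = x * ((1 - x) ^ S₁.card * (μ (⋂ j ∈ S₂, (A j)ᶜ)).toReal) := by ring
        _ ≤ x * (μ (⋂ j ∈ S, (A j)ᶜ)).toReal := mul_le_mul_of_nonneg_left hpeel hx0

theorem stmt15 {Ω : Type*} [MeasurableSpace Ω] (μ : Measure Ω) [IsProbabilityMeasure μ]
    (n : ℕ) (A : Fin n → Set Ω) (hA : ∀ i, MeasurableSet (A i))
    (N : Fin n → Finset (Fin n)) (d : ℕ) (hdeg : ∀ i, (N i).card ≤ d)
    (hind : ∀ (i : Fin n) (J : Finset (Fin n)), (∀ j ∈ J, j ≠ i ∧ j ∉ N i) →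
      μ (A i ∩ ⋂ j ∈ J, (A j)ᶜ) = μ (A i) * μ (⋂ j ∈ J, (A j)ᶜ))
    (p : ℝ) (hp : ∀ i, (μ (A i)).toReal ≤ p)
    (hLLL : Real.exp 1 * p * (d + 1) ≤ 1)
    (E : Set Ω) (hE : MeasurableSet E) (NE : Finset (Fin n))
    (hEind : ∀ (J : Finset (Fin n)), (∀ j ∈ J, j ∉ NE) →
      μ (E ∩ ⋂ j ∈ J, (A j)ᶜ) = μ E * μ (⋂ j ∈ J, (A j)ᶜ)) :
    (μ (E ∩ ⋂ i, (A i)ᶜ)).toReal ≤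
      (μ E).toReal * (1 + Real.exp 1 * p) ^ NE.card * (μ (⋂ i, (A i)ᶜ)).toReal := by
  rcases Nat.eq_zero_or_pos n with hn | hn
  · subst hn
    have hNE : NE = ∅ := Finset.eq_empty_of_forall_notMem (fun x _ => x.elim0)
    have hU : (⋂ i : Fin 0, (A i)ᶜ) = Set.univ := Set.iInter_of_empty _
    simp [hNE, hU]
  · have i0 : Fin n := ⟨0, hn⟩
    have hp0 : 0 ≤ p := le_trans ENNReal.toReal_nonneg (hp i0)
    set ε := Real.exp 1 * p with hεdef
    have hε0 : 0 ≤ ε := mul_nonneg (Real.exp_pos 1).le hp0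
    have h1ε : 0 < 1 + ε := by linarith
    have hεd : ε * (d + 1) ≤ 1 := by
      have := hLLL; push_cast at this ⊢; linarith
    set x := ε / (1 + ε) with hxdef
    have hx0 : 0 ≤ x := div_nonneg hε0 h1ε.le
    have hx1 : x ≤ 1 := by rw [div_le_one h1ε]; linarith
    have h1x : 1 - x = (1 + ε)⁻¹ := by
      rw [hxdef]; field_simp; ring
    have hexp : (1 + ε) ^ (d + 1) ≤ Real.exp 1 := by
      calc (1 + ε) ^ (d + 1) ≤ (Real.exp ε) ^ (d + 1) := by
            apply pow_le_pow_left₀ (by linarith)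
            have := Real.add_one_le_exp ε; linarith
        _ = Real.exp (ε * (d + 1)) := by
            rw [← Real.exp_nat_mul]; push_cast; ring_nf
        _ ≤ Real.exp 1 := Real.exp_le_exp.mpr hεd
    have hpx : p ≤ x * (1 - x) ^ d := by
      rw [h1x, hxdef]
      have hpow : (0:ℝ) < (1 + ε) ^ (d + 1) := pow_pos h1ε _
      have heq : ε / (1 + ε) * ((1 + ε)⁻¹) ^ d = ε / (1 + ε) ^ (d + 1) := by
        rw [div_mul_eq_mul_div, inv_pow, pow_succ]
        field_simp
      rw [heq, le_div_iff₀ hpow]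
      calc p * (1 + ε) ^ (d + 1) ≤ p * Real.exp 1 := mul_le_mul_of_nonneg_left hexp hp0
        _ = ε := by rw [hεdef]; ring
    have core := core_aux μ A hA N d hdeg hind p x hp hx0 hx1 hpx
    set S₂ := (Finset.univ : Finset (Fin n)) \ NE with hS₂def
    have hU : S₂ ∪ NE = Finset.univ := Finset.sdiff_union_of_subset (Finset.subset_univ NE)
    have hpeel := peel_aux μ A hA x hx0 hx1 S₂ NE
      (fun k _ T' _ _ => core (S₂ ∪ T') k)
    rw [hU] at hpeel
    have hiU : (⋂ i, (A i)ᶜ) = ⋂ j ∈ (Finset.univ : Finset (Fin n)), (A j)ᶜ := by simp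
    have hmono : (μ (E ∩ ⋂ i, (A i)ᶜ)).toReal ≤ (μ (E ∩ ⋂ j ∈ S₂, (A j)ᶜ)).toReal := by
      apply ENNReal.toReal_mono (measure_ne_top _ _)
      apply measure_mono
      apply Set.inter_subset_inter_right
      rw [hiU]
      exact Set.biInter_subset_biInter_left (Finset.subset_univ S₂)
    have hEeq : (μ (E ∩ ⋂ j ∈ S₂, (A j)ᶜ)).toReal
        = (μ E).toReal * (μ (⋂ j ∈ S₂, (A j)ᶜ)).toReal := by
      rw [hEind S₂ (fun j hj => (Finset.mem_sdiff.mp hj).2), ENNReal.toReal_mul]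
    have hone : (1 + ε) ^ NE.card * (1 - x) ^ NE.card = 1 := by
      rw [h1x, ← mul_pow, mul_inv_cancel₀ (ne_of_gt h1ε), one_pow]
    have hq : (μ (⋂ j ∈ S₂, (A j)ᶜ)).toReal
        ≤ (1 + ε) ^ NE.card * (μ (⋂ j ∈ Finset.univ, (A j)ᶜ)).toReal := by
      calc (μ (⋂ j ∈ S₂, (A j)ᶜ)).toReal
          = (1 + ε) ^ NE.card * ((1 - x) ^ NE.card * (μ (⋂ j ∈ S₂, (A j)ᶜ)).toReal) := by
            rw [← mul_assoc, hone, one_mul]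
        _ ≤ (1 + ε) ^ NE.card * (μ (⋂ j ∈ Finset.univ, (A j)ᶜ)).toReal :=
            mul_le_mul_of_nonneg_left hpeel (pow_nonneg h1ε.le _)
    calc (μ (E ∩ ⋂ i, (A i)ᶜ)).toReal
        ≤ (μ E).toReal * (μ (⋂ j ∈ S₂, (A j)ᶜ)).toReal := by rw [← hEeq]; exact hmono
      _ ≤ (μ E).toReal * ((1 + ε) ^ NE.card * (μ (⋂ j ∈ Finset.univ, (A j)ᶜ)).toReal) :=
          mul_le_mul_of_nonneg_left hq ENNReal.toReal_nonneg
      _ = (μ E).toReal * (1 + ε) ^ NE.card * (μ (⋂ i, (A i)ᶜ)).toReal := by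
          rw [hiU]; ring
end
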